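/- Hölder continuity of the ICS vector field on bounded sets: define auxiliary weights m̃_i = m_i + 2^{-i} (so m̃_i > 0 and ∑_i m̃_i = 2), and define F(x, v) = (v, A(x, v)) with A_i(x, v) = κ ∑_{j=1}^∞ m_j ψ(‖x_j − x_i‖) Γ(v_j − v_i). Then for every R₀ > 0 there exists a constant L_{R₀} > 0 such that for all u = (x, v) and ū = (x̄, v̄) with ‖u‖_B ≤ R₀ and ‖ū‖_B ≤ R₀, one has ‖F(u) − F(ū)‖_{H̃} ≤ L_{R₀} ‖u − ū‖_{H̃}^α; i.e., F is α-Hölder continuous from B to the weighted space on bounded sets. -/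

import Mathlib

/-!
The velocity part of `F(u) - F(ū)` is `v - v̄` itself. For the interaction part, the difference
of the `j`-th summands of `A_i` splits as `(ψ - ψ̄) Γ + ψ̄ (Γ - Γ̄)`. On a ball of `B` the factors
`Γ` and `ψ̄` are bounded (the latter because `ψ` is Lipschitz), and `t ↦ sgn t |t|^α` is
`α`-Hölder, so this difference is at most `C m_j (e_j + e_i)` with
`e_j = ‖x_j - x̄_j‖ + ‖v_j - v̄_j‖^α`. Since `m ≤ m̃` and `m̃` has finite mass, Jensen's inequality
for the concave powers `s ↦ s^(p/2)`, `p ≤ 2`, bounds the weighted `ℓ²` norm of these majorants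
by `C (‖x - x̄‖_H̃ + ‖v - v̄‖_H̃^α)`. Finally, on a ball both `H̃`-norms are bounded, so the
remaining first powers `‖·‖_H̃` can be traded for `‖·‖_H̃^α`.
-/

open Filter MeasureTheory
open scoped Topology

noncomputable section

/-- Componentwise sign-power map `Γ`. -/
def Gam (d : ℕ) (α : ℝ) (v : EuclideanSpace ℝ (Fin d)) : EuclideanSpace ℝ (Fin d) :=
  WithLp.toLp 2 (fun k => Real.sign (v k) * |v k| ^ α)

/-- The interaction term `A_i(x,v) = κ ∑_j m_j ψ(‖x_j − x_i‖) Γ(v_j − v_i)`. -/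
def AIC (d : ℕ) (κ α : ℝ) (m : ℕ → ℝ) (ψ : ℝ → ℝ)
    (x v : ℕ → EuclideanSpace ℝ (Fin d)) (i : ℕ) : EuclideanSpace ℝ (Fin d) :=
  κ • ∑' j, (m j * ψ ‖x j - x i‖) • Gam d α (v j - v i)

/-- Weighted `ℓ²` seminorm of a sequence in `ℝ^d`. -/
def wnorm (d : ℕ) (mt : ℕ → ℝ) (u : ℕ → EuclideanSpace ℝ (Fin d)) : ℝ :=
  Real.sqrt (∑' i, mt i * ‖u i‖ ^ 2)

lemma rpow_sub_rpow_le_rpow_sub {a b α : ℝ} (hb : 0 ≤ b) (hba : b ≤ a) (hα0 : 0 ≤ α)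
    (hα1 : α ≤ 1) : a ^ α - b ^ α ≤ (a - b) ^ α := by
  have := Real.rpow_add_le_add_rpow hb (sub_nonneg.2 hba) hα0 hα1
  rw [add_sub_cancel] at this
  linarith

lemma sign_mul_abs_rpow_of_nonneg {t α : ℝ} (ht : 0 ≤ t) (hα : 0 < α) :
    Real.sign t * |t| ^ α = t ^ α := by
  rcases ht.eq_or_lt with rfl | ht
  · simp [Real.zero_rpow hα.ne']
  · rw [Real.sign_of_pos ht, abs_of_pos ht, one_mul]

lemma abs_sign_mul_abs_rpow_le (t α : ℝ) : |Real.sign t * |t| ^ α| ≤ |t| ^ α := by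
  rw [abs_mul, abs_of_nonneg (Real.rpow_nonneg (abs_nonneg t) α)]
  refine mul_le_of_le_one_left (by positivity) ?_
  rcases Real.sign_apply_eq t with h | h | h <;> simp [h]

lemma abs_sign_mul_abs_rpow_sub_le_of_nonneg {a b α : ℝ} (ha : 0 ≤ a) (hb : 0 ≤ b)
    (hα0 : 0 < α) (hα1 : α ≤ 1) :
    |Real.sign a * |a| ^ α - Real.sign b * |b| ^ α| ≤ |a - b| ^ α := by
  rw [sign_mul_abs_rpow_of_nonneg ha hα0, sign_mul_abs_rpow_of_nonneg hb hα0]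
  rcases le_total b a with h | h
  · rw [abs_of_nonneg (sub_nonneg.2 (Real.rpow_le_rpow hb h hα0.le)),
      abs_of_nonneg (sub_nonneg.2 h)]
    exact rpow_sub_rpow_le_rpow_sub hb h hα0.le hα1
  · rw [abs_sub_comm, abs_sub_comm a, abs_of_nonneg (sub_nonneg.2 (Real.rpow_le_rpow ha h hα0.le)),
      abs_of_nonneg (sub_nonneg.2 h)]
    exact rpow_sub_rpow_le_rpow_sub ha h hα0.le hα1

lemma abs_sign_mul_abs_rpow_sub_le_of_nonneg_of_nonpos {a b α : ℝ} (ha : 0 ≤ a) (hb : b ≤ 0)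
    (hα0 : 0 < α) :
    |Real.sign a * |a| ^ α - Real.sign b * |b| ^ α| ≤ 2 * |a - b| ^ α := by
  have hab : |a| ≤ |a - b| ∧ |b| ≤ |a - b| := by
    simp only [abs_of_nonneg ha, abs_of_nonpos hb, abs_of_nonneg (by linarith : 0 ≤ a - b)]
    constructor <;> linarith
  calc _ ≤ |Real.sign a * |a| ^ α| + |Real.sign b * |b| ^ α| := abs_sub _ _
    _ ≤ |a| ^ α + |b| ^ α :=
        add_le_add (abs_sign_mul_abs_rpow_le a α) (abs_sign_mul_abs_rpow_le b α)
    _ ≤ 2 * |a - b| ^ α := by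
      have h1 := Real.rpow_le_rpow (abs_nonneg a) hab.1 hα0.le
      have h2 := Real.rpow_le_rpow (abs_nonneg b) hab.2 hα0.le
      linarith

lemma abs_sign_mul_abs_rpow_sub_le {α : ℝ} (hα0 : 0 < α) (hα1 : α ≤ 1) (a b : ℝ) :
    |Real.sign a * |a| ^ α - Real.sign b * |b| ^ α| ≤ 2 * |a - b| ^ α := by
  have h2 : |a - b| ^ α ≤ 2 * |a - b| ^ α := by linarith [Real.rpow_nonneg (abs_nonneg (a - b)) α]
  rcases le_total 0 a with ha | ha <;> rcases le_total 0 b with hb | hb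
  · exact (abs_sign_mul_abs_rpow_sub_le_of_nonneg ha hb hα0 hα1).trans h2
  · exact abs_sign_mul_abs_rpow_sub_le_of_nonneg_of_nonpos ha hb hα0
  · rw [abs_sub_comm, abs_sub_comm a]
    exact abs_sign_mul_abs_rpow_sub_le_of_nonneg_of_nonpos hb ha hα0
  · calc _ = |Real.sign (-a) * |-a| ^ α - Real.sign (-b) * |-b| ^ α| := by
          rw [Real.sign_neg, Real.sign_neg, abs_neg, abs_neg, ← abs_neg]; ring_nf
      _ ≤ |-a - -b| ^ α :=
          abs_sign_mul_abs_rpow_sub_le_of_nonneg (neg_nonneg.2 ha) (neg_nonneg.2 hb) hα0 hα1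
      _ ≤ 2 * |a - b| ^ α := by rwa [neg_sub_neg, abs_sub_comm]

lemma EuclideanSpace.norm_le_sqrt_mul_of_forall_abs_le {d : ℕ} {u : EuclideanSpace ℝ (Fin d)}
    {C : ℝ} (hC : 0 ≤ C) (h : ∀ k, |u k| ≤ C) : ‖u‖ ≤ √d * C := by
  rw [EuclideanSpace.norm_eq, ← Real.sqrt_sq hC, ← Real.sqrt_mul (Nat.cast_nonneg d)]
  refine Real.sqrt_le_sqrt ?_
  calc ∑ k, ‖u k‖ ^ 2 ≤ ∑ _k : Fin d, C ^ 2 := by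
        gcongr with k
        exact (Real.norm_eq_abs _).trans_le (h k)
    _ = d * C ^ 2 := by simp

lemma norm_Gam_sub_Gam_le {d : ℕ} {α : ℝ} (hα0 : 0 < α) (hα1 : α ≤ 1)
    (w w' : EuclideanSpace ℝ (Fin d)) :
    ‖Gam d α w - Gam d α w'‖ ≤ 2 * √d * ‖w - w'‖ ^ α := by
  rw [mul_comm 2, mul_assoc]
  refine EuclideanSpace.norm_le_sqrt_mul_of_forall_abs_le (by positivity) fun k => ?_
  calc |Gam d α w k - Gam d α w' k| ≤ 2 * |w k - w' k| ^ α :=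
        abs_sign_mul_abs_rpow_sub_le hα0 hα1 _ _
    _ ≤ 2 * ‖w - w'‖ ^ α := by
      gcongr
      exact PiLp.norm_apply_le (w - w') k

lemma norm_Gam_le_of_norm_le {d : ℕ} {α : ℝ} (hα0 : 0 < α) (hα1 : α ≤ 1)
    {w : EuclideanSpace ℝ (Fin d)} {r : ℝ} (hw : ‖w‖ ≤ r) : ‖Gam d α w‖ ≤ 2 * √d * r ^ α := by
  have hGam0 : Gam d α 0 = 0 := by ext k; simp [Gam]
  calc ‖Gam d α w‖ ≤ 2 * √d * ‖w‖ ^ α := by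
        simpa [hGam0] using norm_Gam_sub_Gam_le hα0 hα1 w 0
    _ ≤ 2 * √d * r ^ α := by gcongr

lemma rpow_le_rpow_add_rpow_sub_one_mul {a S α : ℝ} (ha : 0 ≤ a) (hS : 0 < S) (hα0 : 0 ≤ α)
    (hα1 : α ≤ 1) : a ^ α ≤ S ^ α + S ^ (α - 1) * a := by
  rcases le_total a S with h | h
  · have := Real.rpow_le_rpow ha h hα0
    have : 0 ≤ S ^ (α - 1) * a := by positivity
    linarith
  · have hpow : a ^ α = a ^ (α - 1) * a := by
      rw [Real.rpow_sub_one (hS.trans_le h).ne', div_mul_cancel₀ _ (hS.trans_le h).ne']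
    have := mul_le_mul_of_nonneg_right
      (Real.rpow_le_rpow_of_nonpos hS h (by linarith : α - 1 ≤ 0)) ha
    have : 0 ≤ S ^ α := by positivity
    linarith

lemma summable_mul_of_le {ι : Type*} {w f : ι → ℝ} {B : ℝ} (hw : ∀ i, 0 ≤ w i)
    (hws : Summable w) (hf : ∀ i, 0 ≤ f i) (hfB : ∀ i, f i ≤ B) :
    Summable fun i => w i * f i :=
  (hws.mul_right B).of_nonneg_of_le (fun i => mul_nonneg (hw i) (hf i))
    fun i => mul_le_mul_of_nonneg_left (hfB i) (hw i)

lemma tsum_mul_rpow_le {ι : Type*} {w a : ι → ℝ} {α W : ℝ} (hα0 : 0 < α) (hα1 : α ≤ 1)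
    (hw : ∀ i, 0 ≤ w i) (ha : ∀ i, 0 ≤ a i) (hws : Summable w) (hW : ∑' i, w i ≤ W)
    (hwa : Summable fun i => w i * a i) :
    ∑' i, w i * a i ^ α ≤ (W + 1) * (∑' i, w i * a i) ^ α := by
  set S := ∑' i, w i * a i
  have hW0 : 0 ≤ W := (tsum_nonneg hw).trans hW
  rcases (tsum_nonneg fun i => mul_nonneg (hw i) (ha i) : 0 ≤ S).eq_or_lt with hS | hS
  · have h0 : ∀ i, w i * a i ^ α = 0 := fun i => by
      have hi : w i * a i = 0 := le_antisymm
        (hS ▸ hwa.le_tsum i fun j _ => mul_nonneg (hw j) (ha j)) (mul_nonneg (hw i) (ha i))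
      rcases mul_eq_zero.1 hi with h | h <;> simp [h, Real.zero_rpow hα0.ne']
    rw [tsum_congr h0, tsum_zero]
    exact mul_nonneg (by linarith) (Real.rpow_nonneg hS.le _)
  · have hpt : ∀ i, w i * a i ^ α ≤ S ^ α * w i + S ^ (α - 1) * (w i * a i) := fun i => by
      have := mul_le_mul_of_nonneg_left
        (rpow_le_rpow_add_rpow_sub_one_mul (ha i) hS hα0.le hα1) (hw i)
      linarith
    have hrhs := (hws.mul_left (S ^ α)).add (hwa.mul_left (S ^ (α - 1)))
    calc ∑' i, w i * a i ^ α
        ≤ ∑' i, (S ^ α * w i + S ^ (α - 1) * (w i * a i)) :=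
          (hrhs.of_nonneg_of_le (fun i => mul_nonneg (hw i) (Real.rpow_nonneg (ha i) _))
            hpt).tsum_le_tsum hpt hrhs
      _ = S ^ α * ∑' i, w i + S ^ (α - 1) * S := by
          rw [(hws.mul_left _).tsum_add (hwa.mul_left _), tsum_mul_left, tsum_mul_left]
      _ ≤ (W + 1) * S ^ α := by
          rw [Real.rpow_sub_one hS.ne', div_mul_cancel₀ _ hS.ne']
          nlinarith [Real.rpow_nonneg hS.le α]

lemma summable_mul_norm_sq_of_le {E : Type*} [SeminormedAddCommGroup E] {w : ℕ → ℝ}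
    (hw : ∀ i, 0 ≤ w i) (hws : Summable w) {u : ℕ → E} {R : ℝ} (hu : ∀ i, ‖u i‖ ≤ R) :
    Summable fun i => w i * ‖u i‖ ^ 2 :=
  summable_mul_of_le hw hws (fun _ => sq_nonneg _)
    fun i => pow_le_pow_left₀ (norm_nonneg _) (hu i) 2

lemma wnorm_le_sqrt_tsum_mul {d : ℕ} {w : ℕ → ℝ} (hw : ∀ i, 0 ≤ w i) (hws : Summable w)
    {u : ℕ → EuclideanSpace ℝ (Fin d)} {R : ℝ} (hu : ∀ i, ‖u i‖ ≤ R) :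
    wnorm d w u ≤ √(∑' i, w i) * R := by
  have hR : 0 ≤ R := (norm_nonneg _).trans (hu 0)
  rw [wnorm, ← Real.sqrt_sq hR, ← Real.sqrt_mul (tsum_nonneg hw), ← tsum_mul_right]
  exact Real.sqrt_le_sqrt <| Summable.tsum_le_tsum
    (fun i => mul_le_mul_of_nonneg_left (pow_le_pow_left₀ (norm_nonneg _) (hu i) 2) (hw i))
    (summable_mul_norm_sq_of_le hw hws hu) (hws.mul_right _)

lemma tsum_mul_norm_rpow_le {d : ℕ} {w : ℕ → ℝ} {W p : ℝ} (hw : ∀ i, 0 ≤ w i)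
    (hws : Summable w) (hW : ∑' i, w i ≤ W) {u : ℕ → EuclideanSpace ℝ (Fin d)}
    (hu : Summable fun i => w i * ‖u i‖ ^ 2) (hp0 : 0 < p) (hp2 : p ≤ 2) :
    ∑' i, w i * ‖u i‖ ^ p ≤ (W + 1) * wnorm d w u ^ p := by
  have hsq : ∀ t : ℝ, 0 ≤ t → (t ^ 2) ^ (p / 2) = t ^ p := fun t ht => by
    rw [← Real.rpow_natCast, ← Real.rpow_mul ht]
    congr 1
    push_cast
    ring
  calc ∑' i, w i * ‖u i‖ ^ p = ∑' i, w i * (‖u i‖ ^ 2) ^ (p / 2) :=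
        tsum_congr fun i => by rw [hsq _ (norm_nonneg _)]
    _ ≤ (W + 1) * (∑' i, w i * ‖u i‖ ^ 2) ^ (p / 2) :=
        tsum_mul_rpow_le (by positivity) (by linarith) hw (fun i => sq_nonneg _) hws hW hu
    _ = (W + 1) * wnorm d w u ^ p := by
        rw [wnorm, ← hsq _ (Real.sqrt_nonneg _),
          Real.sq_sqrt (tsum_nonneg fun i => mul_nonneg (hw i) (sq_nonneg _))]

lemma sqrt_tsum_mul_rpow_sq_le {d : ℕ} {w : ℕ → ℝ} (hw : ∀ i, 0 ≤ w i) (hws : Summable w)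
    {u : ℕ → EuclideanSpace ℝ (Fin d)} (hu : Summable fun i => w i * ‖u i‖ ^ 2) {α : ℝ}
    (hα0 : 0 < α) (hα1 : α ≤ 1) :
    √(∑' i, w i * (‖u i‖ ^ α) ^ 2) ≤ (∑' i, w i + 1) * wnorm d w u ^ α := by
  have h := tsum_mul_norm_rpow_le hw hws le_rfl hu (p := α * (2 : ℕ)) (by positivity)
    (by push_cast; linarith)
  rw [Real.rpow_mul_natCast (x := wnorm d w u) (Real.sqrt_nonneg _), tsum_congr fun i => by
    rw [Real.rpow_mul_natCast (norm_nonneg (u i))]] at h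
  have hΛ : 1 ≤ ∑' i, w i + 1 := by linarith [(tsum_nonneg hw : 0 ≤ ∑' i, w i)]
  have hDα : 0 ≤ wnorm d w u ^ α := Real.rpow_nonneg (Real.sqrt_nonneg _) α
  refine (Real.sqrt_le_left (by positivity)).2 (h.trans ?_)
  nlinarith [sq_nonneg (wnorm d w u ^ α)]

lemma tsum_mul_norm_add_norm_rpow_le {d : ℕ} {m w : ℕ → ℝ} (hm0 : ∀ i, 0 ≤ m i)
    (hmw : ∀ i, m i ≤ w i) (hws : Summable w) {u u' : ℕ → EuclideanSpace ℝ (Fin d)} {R : ℝ}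
    (hu : ∀ i, ‖u i‖ ≤ R) (hu' : ∀ i, ‖u' i‖ ≤ R) {α : ℝ} (hα0 : 0 < α) (hα1 : α ≤ 1) :
    ∑' i, m i * (‖u i‖ + ‖u' i‖ ^ α) ≤ (∑' i, w i + 1) * (wnorm d w u + wnorm d w u' ^ α) := by
  have hw : ∀ i, 0 ≤ w i := fun i => (hm0 i).trans (hmw i)
  have hs1 : Summable fun i => w i * ‖u i‖ := summable_mul_of_le hw hws (fun i => norm_nonneg _) hu
  have hsα : Summable fun i => w i * ‖u' i‖ ^ α := summable_mul_of_le hw hws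
    (fun i => by positivity) fun i => Real.rpow_le_rpow (norm_nonneg _) (hu' i) hα0.le
  have h1 : ∑' i, w i * ‖u i‖ ≤ (∑' i, w i + 1) * wnorm d w u := by
    simpa using tsum_mul_norm_rpow_le hw hws le_rfl (summable_mul_norm_sq_of_le hw hws hu)
      one_pos one_le_two
  have hα : ∑' i, w i * ‖u' i‖ ^ α ≤ (∑' i, w i + 1) * wnorm d w u' ^ α :=
    tsum_mul_norm_rpow_le hw hws le_rfl (summable_mul_norm_sq_of_le hw hws hu') hα0 (by linarith)
  have hle : ∀ i, m i * (‖u i‖ + ‖u' i‖ ^ α) ≤ w i * ‖u i‖ + w i * ‖u' i‖ ^ α := fun i => by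
    rw [← mul_add]
    exact mul_le_mul_of_nonneg_right (hmw i) (by positivity)
  have hs := hs1.add hsα
  calc _ ≤ ∑' i, (w i * ‖u i‖ + w i * ‖u' i‖ ^ α) :=
        (hs.of_nonneg_of_le (fun i => mul_nonneg (hm0 i) (by positivity)) hle).tsum_le_tsum hle hs
    _ ≤ _ := by rw [hs1.tsum_add hsα]; linarith

lemma wnorm_le_of_norm_le_mul_add {d : ℕ} {w : ℕ → ℝ} (hw : ∀ i, 0 ≤ w i) (hws : Summable w)
    {u : ℕ → EuclideanSpace ℝ (Fin d)} {a β : ℝ} {f g : ℕ → ℝ} (ha : 0 ≤ a) (hβ : 0 ≤ β)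
    (hfs : Summable fun i => w i * f i ^ 2) (hgs : Summable fun i => w i * g i ^ 2)
    (hu : ∀ i, ‖u i‖ ≤ β * (a + (f i + g i))) :
    wnorm d w u ≤
      2 * β * (√(∑' i, w i) * a + √(∑' i, w i * f i ^ 2) + √(∑' i, w i * g i ^ 2)) := by
  set W := ∑' i, w i
  set F := ∑' i, w i * f i ^ 2
  set G := ∑' i, w i * g i ^ 2
  have hpt : ∀ i, w i * ‖u i‖ ^ 2 ≤
      3 * β ^ 2 * (a ^ 2 * w i + w i * f i ^ 2 + w i * g i ^ 2) := fun i => by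
    have h1 : ‖u i‖ ^ 2 ≤ (β * (a + f i + g i)) ^ 2 :=
      pow_le_pow_left₀ (norm_nonneg _) (by linarith [hu i]) 2
    have h2 : (a + f i + g i) ^ 2 ≤ 3 * (a ^ 2 + f i ^ 2 + g i ^ 2) := by
      nlinarith [sq_nonneg (a - f i), sq_nonneg (a - g i), sq_nonneg (f i - g i)]
    calc w i * ‖u i‖ ^ 2 ≤ w i * (β ^ 2 * (3 * (a ^ 2 + f i ^ 2 + g i ^ 2))) := by
          rw [mul_pow] at h1
          exact mul_le_mul_of_nonneg_left (h1.trans (by gcongr)) (hw i)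
      _ = _ := by ring
  have hrhs := (((hws.mul_left (a ^ 2)).add hfs).add hgs).mul_left (3 * β ^ 2)
  have hsum : ∑' i, w i * ‖u i‖ ^ 2 ≤ 3 * β ^ 2 * ((√W * a) ^ 2 + √F ^ 2 + √G ^ 2) := by
    calc ∑' i, w i * ‖u i‖ ^ 2
        ≤ ∑' i, 3 * β ^ 2 * (a ^ 2 * w i + w i * f i ^ 2 + w i * g i ^ 2) :=
          (hrhs.of_nonneg_of_le (fun i => mul_nonneg (hw i) (sq_nonneg _)) hpt).tsum_le_tsum
            hpt hrhs
      _ = 3 * β ^ 2 * ((√W * a) ^ 2 + √F ^ 2 + √G ^ 2) := by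
          rw [tsum_mul_left, ((hws.mul_left _).add hfs).tsum_add hgs,
            (hws.mul_left _).tsum_add hfs, tsum_mul_left, mul_pow,
            Real.sq_sqrt (tsum_nonneg hw),
            Real.sq_sqrt (tsum_nonneg fun i => mul_nonneg (hw i) (sq_nonneg _)),
            Real.sq_sqrt (tsum_nonneg fun i => mul_nonneg (hw i) (sq_nonneg _))]
          ring
  have hX : 0 ≤ √W * a := by positivity
  have hY : 0 ≤ √F := Real.sqrt_nonneg _
  have hZ : 0 ≤ √G := Real.sqrt_nonneg _
  have h3 : 3 * ((√W * a) ^ 2 + √F ^ 2 + √G ^ 2) ≤ (2 * (√W * a + √F + √G)) ^ 2 := by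
    nlinarith [mul_nonneg hX hY, mul_nonneg hX hZ, mul_nonneg hY hZ]
  rw [wnorm, Real.sqrt_le_left (by positivity)]
  nlinarith [mul_le_mul_of_nonneg_left h3 (sq_nonneg β)]

lemma norm_smul_sub_smul_le {E : Type*} [SeminormedAddCommGroup E] [NormedSpace ℝ E]
    (r s : ℝ) (g h : E) : ‖r • g - s • h‖ ≤ |r - s| * ‖g‖ + |s| * ‖g - h‖ := by
  have : r • g - s • h = (r - s) • g + s • (g - h) := by
    rw [sub_smul, smul_sub]
    abel
  rw [this, ← Real.norm_eq_abs, ← Real.norm_eq_abs, ← norm_smul, ← norm_smul]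
  exact norm_add_le _ _

lemma summable_mul_smul_of_le {E : Type*} [NormedAddCommGroup E] [NormedSpace ℝ E]
    [CompleteSpace E] {m s : ℕ → ℝ} {g : ℕ → E} {c G : ℝ} (hm0 : ∀ j, 0 ≤ m j)
    (hmS : Summable m) (hs : ∀ j, |s j| ≤ c) (hg : ∀ j, ‖g j‖ ≤ G) :
    Summable fun j => (m j * s j) • g j :=
  Summable.of_norm_bounded (hmS.mul_right (c * G)) fun j => by
    rw [mul_smul, norm_smul, norm_smul, Real.norm_eq_abs, Real.norm_eq_abs, abs_of_nonneg (hm0 j)]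
    exact mul_le_mul_of_nonneg_left
      (mul_le_mul (hs j) (hg j) (norm_nonneg _) ((abs_nonneg _).trans (hs j))) (hm0 j)

lemma LipschitzOnWith.abs_le_of_le {ψ : ℝ → ℝ} {L : NNReal}
    (hψ : LipschitzOnWith L ψ (Set.Ici 0)) {r R : ℝ} (hr : 0 ≤ r) (hrR : r ≤ R) :
    |ψ r| ≤ |ψ 0| + L * R := by
  have := hψ.dist_le_mul r hr 0 Set.self_mem_Ici
  rw [Real.dist_eq, Real.dist_eq, sub_zero, abs_of_nonneg hr] at this
  nlinarith [abs_sub_abs_le_abs_sub (ψ r) (ψ 0), L.coe_nonneg]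

lemma norm_smul_Gam_sub_smul_Gam_le {d : ℕ} {α : ℝ} (hα0 : 0 < α) (hα1 : α ≤ 1)
    {ψ : ℝ → ℝ} {L : NNReal} (hψ : LipschitzOnWith L ψ (Set.Ici 0)) {G P : ℝ}
    (a b a' b' p q p' q' : EuclideanSpace ℝ (Fin d)) (hG : ‖Gam d α (p - q)‖ ≤ G)
    (hP : |ψ ‖a' - b'‖| ≤ P) :
    ‖ψ ‖a - b‖ • Gam d α (p - q) - ψ ‖a' - b'‖ • Gam d α (p' - q')‖ ≤
      (L * G + P * (2 * √d)) * ((‖a - a'‖ + ‖p - p'‖ ^ α) + (‖b - b'‖ + ‖q - q'‖ ^ α)) := by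
  have hψ_sub : |ψ ‖a - b‖ - ψ ‖a' - b'‖| ≤ L * (‖a - a'‖ + ‖b - b'‖) := by
    have := hψ.dist_le_mul _ (norm_nonneg (a - b)) _ (norm_nonneg (a' - b'))
    simp only [← dist_eq_norm] at this ⊢
    exact this.trans (mul_le_mul_of_nonneg_left (dist_dist_dist_le a b a' b') L.coe_nonneg)
  have hGam_sub : ‖Gam d α (p - q) - Gam d α (p' - q')‖ ≤
      2 * √d * (‖p - p'‖ ^ α + ‖q - q'‖ ^ α) := by
    refine (norm_Gam_sub_Gam_le hα0 hα1 _ _).trans (mul_le_mul_of_nonneg_left ?_ (by positivity))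
    rw [sub_sub_sub_comm]
    exact (Real.rpow_le_rpow (norm_nonneg _) (norm_sub_le _ _) hα0.le).trans
      (Real.rpow_add_le_add_rpow (norm_nonneg _) (norm_nonneg _) hα0.le hα1)
  have hP0 : 0 ≤ P := (abs_nonneg _).trans hP
  have hG0 : 0 ≤ G := (norm_nonneg _).trans hG
  calc _ ≤ |ψ ‖a - b‖ - ψ ‖a' - b'‖| * ‖Gam d α (p - q)‖
        + |ψ ‖a' - b'‖| * ‖Gam d α (p - q) - Gam d α (p' - q')‖ := norm_smul_sub_smul_le _ _ _ _
    _ ≤ L * (‖a - a'‖ + ‖b - b'‖) * G + P * (2 * √d * (‖p - p'‖ ^ α + ‖q - q'‖ ^ α)) := by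
        gcongr
    _ ≤ _ := by
        have hLG : 0 ≤ (L : ℝ) * G := by positivity
        have hQ : 0 ≤ P * (2 * √d) := by positivity
        nlinarith [mul_nonneg hLG (add_nonneg (Real.rpow_nonneg (norm_nonneg (p - p')) α)
          (Real.rpow_nonneg (norm_nonneg (q - q')) α)),
          mul_nonneg hQ (add_nonneg (norm_nonneg (a - a')) (norm_nonneg (b - b')))]

lemma exists_norm_AIC_sub_AIC_le {d : ℕ} {α : ℝ} (hα0 : 0 < α) (hα1 : α ≤ 1) {m : ℕ → ℝ}
    (hm0 : ∀ j, 0 ≤ m j) (hmS : Summable m) {ψ : ℝ → ℝ} {L : NNReal}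
    (hψ : LipschitzOnWith L ψ (Set.Ici 0)) (κ : ℝ) {R : ℝ} (hR : 0 ≤ R) :
    ∃ C, 0 ≤ C ∧ ∀ x v xb vb : ℕ → EuclideanSpace ℝ (Fin d),
      (∀ i, ‖x i‖ ≤ R) → (∀ i, ‖v i‖ ≤ R) → (∀ i, ‖xb i‖ ≤ R) → (∀ i, ‖vb i‖ ≤ R) → ∀ i,
        ‖AIC d κ α m ψ x v i - AIC d κ α m ψ xb vb i‖ ≤
          C * (∑' j, m j * (‖x j - xb j‖ + ‖v j - vb j‖ ^ α)
            + (‖x i - xb i‖ + ‖v i - vb i‖ ^ α)) := by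
  set G := 2 * √d * (2 * R) ^ α
  set P := |ψ 0| + L * (2 * R)
  have hG : ∀ {p q : EuclideanSpace ℝ (Fin d)}, ‖p‖ ≤ R → ‖q‖ ≤ R → ‖Gam d α (p - q)‖ ≤ G :=
    fun hp hq => norm_Gam_le_of_norm_le hα0 hα1 (by linarith [norm_sub_le_of_le hp hq])
  have hP : ∀ {a b : EuclideanSpace ℝ (Fin d)}, ‖a‖ ≤ R → ‖b‖ ≤ R → |ψ ‖a - b‖| ≤ P :=
    fun ha hb => hψ.abs_le_of_le (norm_nonneg _) (by linarith [norm_sub_le_of_le ha hb])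
  have hsummable : ∀ x v : ℕ → EuclideanSpace ℝ (Fin d), (∀ i, ‖x i‖ ≤ R) →
      (∀ i, ‖v i‖ ≤ R) → ∀ i, Summable fun j => (m j * ψ ‖x j - x i‖) • Gam d α (v j - v i) :=
    fun x v hx hv i => summable_mul_smul_of_le hm0 hmS (fun j => hP (hx j) (hx i))
      fun j => hG (hv j) (hv i)
  set C := L * G + P * (2 * √d)
  have hC : 0 ≤ C := by positivity
  have hW : 0 ≤ ∑' j, m j := tsum_nonneg hm0
  refine ⟨|κ| * C * (1 + ∑' j, m j), by positivity, fun x v xb vb hx hv hxb hvb i => ?_⟩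
  set e := fun j => ‖x j - xb j‖ + ‖v j - vb j‖ ^ α
  have he : ∀ j, 0 ≤ e j := fun j => by positivity
  have hes : Summable fun j => m j * e j := summable_mul_of_le hm0 hmS he fun j =>
    add_le_add (norm_sub_le_of_le (hx j) (hxb j))
      (Real.rpow_le_rpow (norm_nonneg _) (norm_sub_le_of_le (hv j) (hvb j)) hα0.le)
  have hterm : ∀ j, ‖(m j * ψ ‖x j - x i‖) • Gam d α (v j - v i)
      - (m j * ψ ‖xb j - xb i‖) • Gam d α (vb j - vb i)‖ ≤ C * (m j * e j + e i * m j) :=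
    fun j => by
      rw [mul_smul, mul_smul, ← smul_sub, norm_smul, Real.norm_eq_abs, abs_of_nonneg (hm0 j)]
      calc m j * _ ≤ m j * (C * (e j + e i)) := mul_le_mul_of_nonneg_left
            (norm_smul_Gam_sub_smul_Gam_le hα0 hα1 hψ (x j) (x i) (xb j) (xb i) (v j) (v i)
              (vb j) (vb i) (hG (hv j) (hv i)) (hP (hxb j) (hxb i))) (hm0 j)
        _ = _ := by ring
  have hsum := ((hes.hasSum.add (hmS.hasSum.mul_left (e i))).mul_left C)
  calc ‖AIC d κ α m ψ x v i - AIC d κ α m ψ xb vb i‖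
      ≤ |κ| * (C * (∑' j, m j * e j + e i * ∑' j, m j)) := by
        rw [AIC, AIC, ← smul_sub, norm_smul, Real.norm_eq_abs,
          ← (hsummable x v hx hv i).tsum_sub (hsummable xb vb hxb hvb i)]
        exact mul_le_mul_of_nonneg_left (tsum_of_norm_bounded hsum hterm) (abs_nonneg κ)
    _ ≤ |κ| * C * (1 + ∑' j, m j) * (∑' j, m j * e j + e i) := by
        have hS : 0 ≤ ∑' j, m j * e j := tsum_nonneg fun j => mul_nonneg (hm0 j) (he j)
        have : ∑' j, m j * e j + e i * ∑' j, m j ≤ (1 + ∑' j, m j) * (∑' j, m j * e j + e i) := by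
          nlinarith [he i, mul_nonneg hW hS]
        calc |κ| * (C * _) ≤ |κ| * (C * ((1 + ∑' j, m j) * (∑' j, m j * e j + e i))) := by gcongr
          _ = _ := by ring

lemma exists_wnorm_AIC_sub_AIC_le {d : ℕ} {α : ℝ} (hα0 : 0 < α) (hα1 : α ≤ 1) {m w : ℕ → ℝ}
    (hm0 : ∀ j, 0 ≤ m j) (hmw : ∀ j, m j ≤ w j) (hws : Summable w) {ψ : ℝ → ℝ} {L : NNReal}
    (hψ : LipschitzOnWith L ψ (Set.Ici 0)) (κ : ℝ) {R : ℝ} (hR : 0 ≤ R) :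
    ∃ K, 0 ≤ K ∧ ∀ x v xb vb : ℕ → EuclideanSpace ℝ (Fin d),
      (∀ i, ‖x i‖ ≤ R) → (∀ i, ‖v i‖ ≤ R) → (∀ i, ‖xb i‖ ≤ R) → (∀ i, ‖vb i‖ ≤ R) →
        wnorm d w (fun i => AIC d κ α m ψ x v i - AIC d κ α m ψ xb vb i) ≤
          K * (wnorm d w (fun i => x i - xb i) + wnorm d w (fun i => v i - vb i) ^ α) := by
  have hw0 : ∀ j, 0 ≤ w j := fun j => (hm0 j).trans (hmw j)
  obtain ⟨C, hC0, hC⟩ :=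
    exists_norm_AIC_sub_AIC_le (d := d) hα0 hα1 hm0 (hws.of_nonneg_of_le hm0 hmw) hψ κ hR
  set Λ := ∑' j, w j + 1
  have hΛ : 1 ≤ Λ := by linarith [(tsum_nonneg hw0 : 0 ≤ ∑' j, w j)]
  refine ⟨4 * C * Λ ^ 2, by positivity, fun x v xb vb hx hv hxb hvb => ?_⟩
  set Dx := wnorm d w (fun i => x i - xb i)
  set Dv := wnorm d w (fun i => v i - vb i)
  have hδx : ∀ i, ‖x i - xb i‖ ≤ R + R := fun i => norm_sub_le_of_le (hx i) (hxb i)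
  have hδv : ∀ i, ‖v i - vb i‖ ≤ R + R := fun i => norm_sub_le_of_le (hv i) (hvb i)
  have hsqrtW : √(∑' i, w i) ≤ Λ :=
    (Real.sqrt_le_left (by positivity)).2 (by nlinarith [(tsum_nonneg hw0 : 0 ≤ ∑' j, w j)])
  have hDx : 0 ≤ Dx := Real.sqrt_nonneg _
  have hDvα : 0 ≤ Dv ^ α := Real.rpow_nonneg (Real.sqrt_nonneg _) α
  have hΛx : Dx + Λ * Dv ^ α ≤ Λ ^ 2 * (Dx + Dv ^ α) := by
    nlinarith [mul_nonneg (by nlinarith : 0 ≤ Λ ^ 2 - 1) hDx,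
      mul_nonneg (by nlinarith : 0 ≤ Λ ^ 2 - Λ) hDvα]
  have hS0 : 0 ≤ ∑' j, m j * (‖x j - xb j‖ + ‖v j - vb j‖ ^ α) :=
    tsum_nonneg fun j => mul_nonneg (hm0 j) (by positivity)
  calc wnorm d w (fun i => AIC d κ α m ψ x v i - AIC d κ α m ψ xb vb i)
      ≤ 2 * C * (√(∑' i, w i) * ∑' j, m j * (‖x j - xb j‖ + ‖v j - vb j‖ ^ α)
          + Dx + √(∑' i, w i * (‖v i - vb i‖ ^ α) ^ 2)) :=
        wnorm_le_of_norm_le_mul_add hw0 hws hS0 hC0 (summable_mul_norm_sq_of_le hw0 hws hδx)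
          (summable_mul_of_le hw0 hws (fun i => by positivity) fun i => pow_le_pow_left₀
            (by positivity) (Real.rpow_le_rpow (norm_nonneg _) (hδv i) hα0.le) 2)
          (hC x v xb vb hx hv hxb hvb)
    _ ≤ 2 * C * (Λ * (Λ * (Dx + Dv ^ α)) + Dx + Λ * Dv ^ α) := by
        gcongr
        · exact tsum_mul_norm_add_norm_rpow_le hm0 hmw hws hδx hδv hα0 hα1
        · exact sqrt_tsum_mul_rpow_sq_le hw0 hws (summable_mul_norm_sq_of_le hw0 hws hδv) hα0 hα1
    _ ≤ 4 * C * Λ ^ 2 * (Dx + Dv ^ α) := by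
        nlinarith [mul_le_mul_of_nonneg_left hΛx hC0]

lemma le_rpow_one_sub_mul_rpow {t N α : ℝ} (ht : 0 ≤ t) (htN : t ≤ N) (hα0 : 0 < α)
    (hα1 : α ≤ 1) : t ≤ N ^ (1 - α) * t ^ α := by
  rcases ht.eq_or_lt with rfl | ht
  · rw [Real.zero_rpow hα0.ne', mul_zero]
  · calc t = t ^ (1 - α) * t ^ α := by rw [← Real.rpow_add ht, sub_add_cancel, Real.rpow_one]
      _ ≤ N ^ (1 - α) * t ^ α := by gcongr

lemma add_mul_add_rpow_le {s t N K α : ℝ} (hs : 0 ≤ s) (ht : 0 ≤ t) (hN : s + t ≤ N)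
    (hK : 0 ≤ K) (hα0 : 0 < α) (hα1 : α ≤ 1) :
    t + K * (s + t ^ α) ≤ (1 + K) * (N ^ (1 - α) + 1) * (s + t) ^ α := by
  have hD := le_rpow_one_sub_mul_rpow (add_nonneg hs ht) hN hα0 hα1
  have htα : t ^ α ≤ (s + t) ^ α := by gcongr; linarith
  have hDα : 0 ≤ (s + t) ^ α := by positivity
  nlinarith [mul_le_mul_of_nonneg_left hD hK, mul_le_mul_of_nonneg_left htα hK]

lemma forall_norm_le_of_iSup_add_iSup_le {ι E F : Type*} [SeminormedAddCommGroup E]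
    [SeminormedAddCommGroup F] {x : ι → E} {v : ι → F} {R : ℝ}
    (hx : BddAbove (Set.range fun i => ‖x i‖)) (hv : BddAbove (Set.range fun i => ‖v i‖))
    (h : (⨆ i, ‖x i‖) + (⨆ i, ‖v i‖) ≤ R) : (∀ i, ‖x i‖ ≤ R) ∧ ∀ i, ‖v i‖ ≤ R := by
  have hx0 : 0 ≤ ⨆ i, ‖x i‖ := Real.iSup_nonneg fun i => norm_nonneg _
  have hv0 : 0 ≤ ⨆ i, ‖v i‖ := Real.iSup_nonneg fun i => norm_nonneg _
  exact ⟨fun i => by linarith [le_ciSup hx i], fun i => by linarith [le_ciSup hv i]⟩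

theorem stmt16_general (d : ℕ) (κ : ℝ) (α : ℝ) (hα0 : 0 < α) (hα1 : α < 1)
    (m : ℕ → ℝ) (hm0 : ∀ j, 0 ≤ m j) (hmS : Summable m)
    (ψ : ℝ → ℝ) (hψLip : ∃ L : NNReal, LipschitzOnWith L ψ (Set.Ici 0))
    (mt : ℕ → ℝ) (hmt : ∀ i, mt i = m i + (2:ℝ)⁻¹ ^ i) :
    ∀ R₀ : ℝ, 0 < R₀ → ∃ L : ℝ, 0 < L ∧
      ∀ x v xb vb : ℕ → EuclideanSpace ℝ (Fin d),
        BddAbove (Set.range fun i => ‖x i‖) → BddAbove (Set.range fun i => ‖v i‖) →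
        BddAbove (Set.range fun i => ‖xb i‖) → BddAbove (Set.range fun i => ‖vb i‖) →
        (⨆ i, ‖x i‖) + (⨆ i, ‖v i‖) ≤ R₀ →
        (⨆ i, ‖xb i‖) + (⨆ i, ‖vb i‖) ≤ R₀ →
        wnorm d mt (fun i => v i - vb i) +
            wnorm d mt (fun i => AIC d κ α m ψ x v i - AIC d κ α m ψ xb vb i) ≤
          L * (wnorm d mt (fun i => x i - xb i) + wnorm d mt (fun i => v i - vb i)) ^ α := by
  intro R₀ hR₀
  obtain ⟨Lψ, hψ⟩ := hψLip
  have hm_le : ∀ i, m i ≤ mt i := fun i => by rw [hmt]; exact le_add_of_nonneg_right (by positivity)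
  have hmt0 : ∀ i, 0 ≤ mt i := fun i => (hm0 i).trans (hm_le i)
  have hmtS : Summable mt :=
    (hmS.add (summable_geometric_of_lt_one (by norm_num) (by norm_num))).congr fun i => (hmt i).symm
  obtain ⟨K, hK0, hK⟩ := exists_wnorm_AIC_sub_AIC_le hα0 hα1.le hm0 hm_le hmtS hψ κ hR₀.le
  set N := √(∑' i, mt i) * (R₀ + R₀)
  refine ⟨(1 + K) * ((N + N) ^ (1 - α) + 1), by positivity, ?_⟩
  intro x v xb vb hx hv hxb hvb hR hRb
  obtain ⟨hxR, hvR⟩ := forall_norm_le_of_iSup_add_iSup_le hx hv hR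
  obtain ⟨hxbR, hvbR⟩ := forall_norm_le_of_iSup_add_iSup_le hxb hvb hRb
  have hDx := wnorm_le_sqrt_tsum_mul hmt0 hmtS fun i => norm_sub_le_of_le (hxR i) (hxbR i)
  have hDv := wnorm_le_sqrt_tsum_mul hmt0 hmtS fun i => norm_sub_le_of_le (hvR i) (hvbR i)
  calc _ ≤ wnorm d mt (fun i => v i - vb i) + K * (wnorm d mt (fun i => x i - xb i) +
        wnorm d mt (fun i => v i - vb i) ^ α) := by
        gcongr
        exact hK x v xb vb hxR hvR hxbR hvbR
    _ ≤ _ := add_mul_add_rpow_le (Real.sqrt_nonneg _) (Real.sqrt_nonneg _) (add_le_add hDx hDv)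
        hK0 hα0 hα1.le

/-- Hölder continuity of the ICS vector field `F(x,v) = (v, A(x,v))` on
bounded subsets of `B`, from `B` into the weighted space with the auxiliary weights
`m̃_i = m_i + 2^{-i}`: `‖F(u) − F(ū)‖_{H̃} ≤ L_{R₀} ‖u − ū‖_{H̃}^α`. -/
theorem stmt16 (d : ℕ) (hd : 1 ≤ d) (κ : ℝ) (hκ : 0 < κ) (α : ℝ) (hα0 : 0 < α) (hα1 : α < 1)
    (m : ℕ → ℝ) (hm0 : ∀ j, 0 ≤ m j) (hmS : Summable m) (hm1 : ∑' j, m j = 1)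
    (ψ : ℝ → ℝ) (hψLip : ∃ L : NNReal, LipschitzOnWith L ψ (Set.Ici 0))
    (hψbdd : ∃ C : ℝ, ∀ r, 0 ≤ r → ψ r ≤ C)
    (hψanti : AntitoneOn ψ (Set.Ici 0)) (hψnn : ∀ r, 0 ≤ r → 0 ≤ ψ r)
    (mt : ℕ → ℝ) (hmt : ∀ i, mt i = m i + (2:ℝ)⁻¹ ^ i) :
    ∀ R₀ : ℝ, 0 < R₀ → ∃ L : ℝ, 0 < L ∧
      ∀ x v xb vb : ℕ → EuclideanSpace ℝ (Fin d),
        BddAbove (Set.range fun i => ‖x i‖) → BddAbove (Set.range fun i => ‖v i‖) →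
        BddAbove (Set.range fun i => ‖xb i‖) → BddAbove (Set.range fun i => ‖vb i‖) →
        (⨆ i, ‖x i‖) + (⨆ i, ‖v i‖) ≤ R₀ →
        (⨆ i, ‖xb i‖) + (⨆ i, ‖vb i‖) ≤ R₀ →
        wnorm d mt (fun i => v i - vb i) +
            wnorm d mt (fun i => AIC d κ α m ψ x v i - AIC d κ α m ψ xb vb i) ≤
          L * (wnorm d mt (fun i => x i - xb i) + wnorm d mt (fun i => v i - vb i)) ^ α :=
  stmt16_general d κ α hα0 hα1 m hm0 hmS ψ hψLip mt hmt
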